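/- Let U be a unitary on ℂ^d ⊗ ℂ² (system ⊗ dirty qubit q) and let |Φ⟩ = (|00⟩+|11⟩)/√2 be the Bell state of q with an external qubit q'. Then U = V ⊗ I₂ for some unitary V on ℂ^d if and only if for every vector |i⟩ in an orthonormal basis of ℂ^d, (U ⊗ I_{q'})(|i⟩ ⊗ |Φ⟩) = |β_i⟩ ⊗ |Φ⟩ for some unit vector |β_i⟩ ∈ ℂ^d. -/
import Mathlib


open Matrix Kronecker

noncomputable section

/-- Extension `U ⊗ I_{q'}` of an operator on `ℂ^d ⊗ ℂ²` (system, qubit `q`) by the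
identity on the external qubit `q'`; the total space has index `Fin d × Fin 2 × Fin 2`. -/
def extOp {d : ℕ} (U : Matrix (Fin d × Fin 2) (Fin d × Fin 2) ℂ) :
    Matrix (Fin d × Fin 2 × Fin 2) (Fin d × Fin 2 × Fin 2) ℂ :=
  Matrix.of fun p q => U (p.1, p.2.1) (q.1, q.2.1) * (if p.2.2 = q.2.2 then 1 else 0)

/-- The vector `|i⟩ ⊗ |Φ⟩` with `|Φ⟩ = (|00⟩+|11⟩)/√2` the Bell state of `q` and `q'`. -/
def basisBell {d : ℕ} (i : Fin d) : Fin d × Fin 2 × Fin 2 → ℂ :=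
  fun p => (if p.1 = i then 1 else 0) *
    (if p.2.1 = p.2.2 then ((Real.sqrt 2 : ℂ))⁻¹ else 0)

/-- The vector `|β⟩ ⊗ |Φ⟩`. -/
def vecBell {d : ℕ} (β : Fin d → ℂ) : Fin d × Fin 2 × Fin 2 → ℂ :=
  fun p => β p.1 * (if p.2.1 = p.2.2 then ((Real.sqrt 2 : ℂ))⁻¹ else 0)

lemma sqrt2inv_ne : ((Real.sqrt 2 : ℂ))⁻¹ ≠ 0 := by
  simp [Complex.ofReal_ne_zero, Real.sqrt_ne_zero']

lemma key {d : ℕ} (U : Matrix (Fin d × Fin 2) (Fin d × Fin 2) ℂ) (i : Fin d) :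
    (extOp U).mulVec (basisBell i) =
      fun p => U (p.1, p.2.1) (i, p.2.2) * ((Real.sqrt 2 : ℂ))⁻¹ := by
  funext p
  simp only [mulVec, dotProduct, extOp, basisBell, Matrix.of_apply]
  rw [Finset.sum_eq_single (i, p.2.2, p.2.2)]
  · simp
  · rintro ⟨q1, q2, q3⟩ - hq
    rcases eq_or_ne q1 i with h1 | h1
    · rcases eq_or_ne q2 q3 with h2 | h2
      · rcases eq_or_ne p.2.2 q3 with h3 | h3
        · exact absurd (by simp [h1, h2, ← h3, Prod.ext_iff]) hq
        · simp [h3]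
      · simp [h2]
    · simp [h1]
  · simp

/-- A unitary `U` on `ℂ^d ⊗ ℂ²` equals `V ⊗ I₂` for some unitary `V` on `ℂ^d` iff for
every vector `|i⟩` of the computational orthonormal basis of `ℂ^d`,
`(U ⊗ I_{q'})(|i⟩ ⊗ |Φ⟩) = |β_i⟩ ⊗ |Φ⟩` for some unit vector `|β_i⟩ ∈ ℂ^d`. -/
theorem stmt18 {d : ℕ} (U : Matrix (Fin d × Fin 2) (Fin d × Fin 2) ℂ)
    (hU : U ∈ Matrix.unitaryGroup (Fin d × Fin 2) ℂ) :
    (∃ V ∈ Matrix.unitaryGroup (Fin d) ℂ,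
        U = V ⊗ₖ (1 : Matrix (Fin 2) (Fin 2) ℂ)) ↔
    (∀ i : Fin d, ∃ β : Fin d → ℂ, (∑ a, ‖β a‖ ^ 2) = 1 ∧
        (extOp U).mulVec (basisBell i) = vecBell β) := by
  constructor
  · rintro ⟨V, hV, rfl⟩ i
    refine ⟨fun a => V a i, ?_, ?_⟩
    · have h1 : (star V * V) i i = (1 : Matrix (Fin d) (Fin d) ℂ) i i := by
        rw [Matrix.mem_unitaryGroup_iff'.mp hV]
      have : (((∑ a, ‖V a i‖ ^ 2 : ℝ)) : ℂ) = 1 := by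
        rw [Complex.ofReal_sum]
        simpa [Matrix.mul_apply, star_apply, RCLike.conj_mul] using h1
      exact_mod_cast this
    · rw [key]
      funext p
      simp only [vecBell, kroneckerMap_apply, Matrix.one_apply]
      rcases eq_or_ne p.2.1 p.2.2 with h | h <;> simp [h]
  · intro h
    set c := ((Real.sqrt 2 : ℂ))⁻¹ with hc
    choose β hβnorm hβeq using h
    have hentry : ∀ (j : Fin d) (a : Fin d) (s t : Fin 2),
        U (a, s) (j, t) = β j a * (if s = t then 1 else 0) := by
      intro j a s t
      have := congrFun (hβeq j) (a, s, t)
      rw [key] at this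
      simp only [vecBell] at this
      have h2 : U (a, s) (j, t) * c = β j a * (if s = t then c else 0) := this
      rcases eq_or_ne s t with hst | hst
      · subst hst
        rw [if_pos rfl] at h2
        rw [if_pos rfl, mul_one]
        exact mul_right_cancel₀ sqrt2inv_ne h2
      · simp only [if_neg hst, mul_zero] at h2 ⊢
        have : U (a, s) (j, t) * c = 0 * c := by rw [h2, zero_mul]
        exact mul_right_cancel₀ sqrt2inv_ne this
    set V : Matrix (Fin d) (Fin d) ℂ := Matrix.of fun a j => β j a with hVdef
    have hUV : U = V ⊗ₖ (1 : Matrix (Fin 2) (Fin 2) ℂ) := by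
      ext ⟨a, s⟩ ⟨j, t⟩
      simp only [kroneckerMap_apply, Matrix.one_apply, hVdef, Matrix.of_apply]
      exact hentry j a s t
    refine ⟨V, ?_, hUV⟩
    rw [Matrix.mem_unitaryGroup_iff']
    ext j k
    have hU' : (star U * U) ((j, 0) : Fin d × Fin 2) (k, 0) =
        (1 : Matrix (Fin d × Fin 2) (Fin d × Fin 2) ℂ) (j, 0) (k, 0) := by
      rw [Matrix.mem_unitaryGroup_iff'.mp hU]
    simp only [Matrix.mul_apply, star_apply, Matrix.one_apply] at hU' ⊢
    have lhs_eq : ∑ x : Fin d × Fin 2, star (U x (j, 0)) * U x (k, 0) =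
        ∑ a : Fin d, star (V a j) * V a k := by
      rw [Fintype.sum_prod_type]
      refine Finset.sum_congr rfl fun a _ => ?_
      rw [Fin.sum_univ_two]
      simp [hentry, hVdef]
    rw [lhs_eq] at hU'
    rw [hU']
    simp [Prod.ext_iff]
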